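/- There exists a constant k > 0 such that for all integers N ≥ 1, the inverse spectral gap S(N,2) of the birth-and-death toy model with d = 2 (i.e. α = 1/2, state space {0,…,N²}) satisfies N/k ≤ S(N,2) ≤ k N. -/

import Mathlib

/-!
Birth-and-death toy model for droplet evolution: in dimension `d = 2`
(i.e. `α = 1/2`, state space `{0,…,N²}`), the inverse spectral gap
`S(N,2)` is of order `N`.
-/

open Finset

noncomputable section

/-- The exponent `α = (d-1)/d`. -/
def alphaOf (d : ℕ) : ℝ := ((d : ℝ) - 1) / d

/-- Normalization `Z_N = ∑_{x=0}^{N^d} exp(-x^α)`. -/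
def Ztoy (d N : ℕ) : ℝ :=
  ∑ x ∈ Finset.range (N ^ d + 1), Real.exp (-(x : ℝ) ^ alphaOf d)

/-- The reversible probability measure `μ_N(x) = exp(-x^α)/Z_N`. -/
def muToy (d N : ℕ) (x : ℕ) : ℝ :=
  Real.exp (-(x : ℝ) ^ alphaOf d) / Ztoy d N

/-- The birth rate `b(x) = (max(x,1))^α`. -/
def bToy (d : ℕ) (x : ℕ) : ℝ := ((max x 1 : ℕ) : ℝ) ^ alphaOf d

/-- Dirichlet form `E_N(f) = ∑_{x=0}^{N^d-1} μ_N(x) b(x) (f(x+1)-f(x))²`. -/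
def dirToy (d N : ℕ) (f : ℕ → ℝ) : ℝ :=
  ∑ x ∈ Finset.range (N ^ d), muToy d N x * bToy d x * (f (x + 1) - f x) ^ 2

/-- Mean of `f` under `μ_N`. -/
def meanToy (d N : ℕ) (f : ℕ → ℝ) : ℝ :=
  ∑ x ∈ Finset.range (N ^ d + 1), muToy d N x * f x

/-- Variance of `f` under `μ_N`. -/
def varToy (d N : ℕ) (f : ℕ → ℝ) : ℝ :=
  ∑ x ∈ Finset.range (N ^ d + 1), muToy d N x * (f x - meanToy d N f) ^ 2

/-- The inverse spectral gap `S(N,d)`: the smallest constant `c` such that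
`Var_{μ_N}(f) ≤ c · E_N(f)` for all `f`. -/
def invGapToy (d N : ℕ) : ℝ :=
  sInf {c : ℝ | ∀ f : ℕ → ℝ, varToy d N f ≤ c * dirToy d N f}

/-!
Upper bound: write `f x - f 0` as the sum of the increments of `f` and apply Cauchy–Schwarz with
the weights `c u = exp (√(u+1) / 2) - exp (√u / 2)`, whose partial sums telescope to
`exp (√x / 2) - 1`. After exchanging the order of summation, the increment at `u` is weighted by
`∑_{x > u} μ(x) (exp (√x / 2) - 1) ≲ (√u + 2) exp (-√u / 2) / Z`, while it enters the Dirichlet form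
with weight `μ(u) b(u) ≳ exp (-√u / 2) / (c u Z)`; the ratio is `O(√u + 2) = O(N)`.

Lower bound: for `f x = exp √x` every increment satisfies
`μ(x) b(x) (f (x+1) - f x)² ≤ e (f (x+1) - f x) / Z`, so the Dirichlet form telescopes to at most
`e · e^N / Z`. The `N` sites of `(N² - N, N²]` carry less mass than the site `0`, so the variance
of `f` is at least a quarter of `∑_{y ∈ (N² - N, N²]} μ(y) (f y - f 0)² ≥ N e^N / (4 e Z)`.
-/

open Real

section WeightedSums

variable {ι : Type*} {s B : Finset ι} {w f : ι → ℝ}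

theorem sum_mul_sq_sub_sum_mul_le (hw : ∑ x ∈ s, w x = 1) (a : ℝ) :
    ∑ x ∈ s, w x * (f x - ∑ y ∈ s, w y * f y) ^ 2 ≤ ∑ x ∈ s, w x * (f x - a) ^ 2 := by
  set m := ∑ y ∈ s, w y * f y
  have expand : ∀ x, w x * (f x - a) ^ 2
      = w x * (f x - m) ^ 2 + 2 * (m - a) * (w x * f x) + ((m - a) ^ 2 - 2 * (m - a) * m) * w x :=
    fun x => by ring
  rw [sum_congr rfl fun x _ => expand x, sum_add_distrib, sum_add_distrib, ← mul_sum, ← mul_sum,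
    hw]
  nlinarith [sq_nonneg (m - a)]

theorem sum_mul_sq_sub_le_four_mul (hw : ∀ x ∈ s, 0 ≤ w x) (hB : B ⊆ s) {x₀ : ι} (hx₀ : x₀ ∈ s)
    (hmass : ∑ y ∈ B, w y ≤ w x₀) (m : ℝ) :
    ∑ y ∈ B, w y * (f y - f x₀) ^ 2 ≤ 4 * ∑ x ∈ s, w x * (f x - m) ^ 2 := by
  have hterm : ∀ x ∈ s, 0 ≤ w x * (f x - m) ^ 2 := fun x hx => mul_nonneg (hw x hx) (sq_nonneg _)
  have hBs : ∑ y ∈ B, w y * (f y - m) ^ 2 ≤ ∑ x ∈ s, w x * (f x - m) ^ 2 :=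
    sum_le_sum_of_subset_of_nonneg hB fun x hx _ => hterm x hx
  have hx₀s : w x₀ * (f x₀ - m) ^ 2 ≤ ∑ x ∈ s, w x * (f x - m) ^ 2 :=
    single_le_sum hterm hx₀
  calc ∑ y ∈ B, w y * (f y - f x₀) ^ 2
      ≤ ∑ y ∈ B, (2 * (w y * (f y - m) ^ 2) + 2 * (f x₀ - m) ^ 2 * w y) := by
        refine sum_le_sum fun y hy => ?_
        nlinarith [mul_nonneg (hw y (hB hy)) (sq_nonneg (f y + f x₀ - 2 * m))]
    _ = 2 * ∑ y ∈ B, w y * (f y - m) ^ 2 + 2 * (f x₀ - m) ^ 2 * ∑ y ∈ B, w y := by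
        rw [sum_add_distrib, mul_sum, mul_sum]
    _ ≤ 2 * ∑ y ∈ B, w y * (f y - m) ^ 2 + 2 * (f x₀ - m) ^ 2 * w x₀ := by gcongr
    _ ≤ 4 * ∑ x ∈ s, w x * (f x - m) ^ 2 := by linarith

end WeightedSums

/-- A weighted Hardy inequality: write `f x - f 0` as the sum of the increments of `f`, apply
Cauchy–Schwarz with the weights `c`, and exchange the order of summation. -/
theorem sum_mul_sq_sub_apply_zero_le {w c r : ℕ → ℝ} {M : ℕ} {K : ℝ} (hw : ∀ x, 0 ≤ w x)
    (hc : ∀ u, 0 < c u)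
    (hK : ∀ u < M, ∑ x ∈ Ioc u M, w x * ∑ v ∈ range x, c v ≤ K * (c u * r u)) (f : ℕ → ℝ) :
    ∑ x ∈ range (M + 1), w x * (f x - f 0) ^ 2
      ≤ K * ∑ u ∈ range M, r u * (f (u + 1) - f u) ^ 2 := by
  set g : ℕ → ℝ := fun u => (f (u + 1) - f u) ^ 2 / c u
  have hg : ∀ u, 0 ≤ g u := fun u => div_nonneg (sq_nonneg _) (hc u).le
  have cauchySchwarz : ∀ x, (f x - f 0) ^ 2 ≤ (∑ v ∈ range x, c v) * ∑ v ∈ range x, g v := by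
    intro x
    rw [← sum_range_sub f x]
    exact sum_sq_le_sum_mul_sum_of_sq_le_mul _ (fun v _ => (hc v).le) (fun v _ => hg v)
      fun v _ => (mul_div_cancel₀ _ (hc v).ne').ge
  calc ∑ x ∈ range (M + 1), w x * (f x - f 0) ^ 2
      ≤ ∑ x ∈ range (M + 1), ∑ u ∈ range x, w x * (∑ v ∈ range x, c v) * g u := by
        refine sum_le_sum fun x _ => ?_
        rw [← mul_sum, mul_assoc]
        exact mul_le_mul_of_nonneg_left (cauchySchwarz x) (hw x)
    _ = ∑ u ∈ range M, ∑ x ∈ Ioc u M, w x * (∑ v ∈ range x, c v) * g u :=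
        sum_comm' fun x u => by simp only [mem_range, mem_Ioc]; omega
    _ ≤ ∑ u ∈ range M, K * (c u * r u) * g u := by
        refine sum_le_sum fun u hu => ?_
        rw [← sum_mul]
        exact mul_le_mul_of_nonneg_right (hK u (mem_range.1 hu)) (hg u)
    _ = K * ∑ u ∈ range M, r u * (f (u + 1) - f u) ^ 2 := by
        rw [mul_sum]
        refine sum_congr rfl fun u _ => ?_
        simp only [g]
        field_simp [(hc u).ne']

theorem mul_exp_le_exp_sub_exp (a b : ℝ) : (b - a) * exp a ≤ exp b - exp a := by
  have := mul_le_mul_of_nonneg_right (add_one_le_exp (b - a)) (exp_pos a).le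
  rw [← exp_add, sub_add_cancel] at this
  linarith

theorem exp_sub_exp_le_mul_exp (a b : ℝ) : exp b - exp a ≤ (b - a) * exp b := by
  have := mul_le_mul_of_nonneg_right (add_one_le_exp (a - b)) (exp_pos b).le
  rw [← exp_add, sub_add_cancel] at this
  linarith

theorem sqrt_add_one_sub_sqrt_mul (x : ℝ) (hx : 0 ≤ x) :
    (√(x + 1) - √x) * (√(x + 1) + √x) = 1 := by
  ring_nf
  rw [sq_sqrt hx, sq_sqrt (by linarith)]
  ring

/-- Discrete counterpart of `∫ exp (-√t / 2) dt = -4 (√t + 2) exp (-√t / 2)`. -/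
theorem exp_neg_sqrt_half_le_sub {x : ℝ} (hx : 1 ≤ x) :
    exp (-√x / 2) ≤ 8 * ((√x + 2) * exp (-√x / 2) - (√(x + 1) + 2) * exp (-√(x + 1) / 2)) := by
  set a := √x
  set b := √(x + 1)
  have ha : 1 ≤ a := one_le_sqrt.2 hx
  have hb : 0 ≤ b := sqrt_nonneg _
  have hab : (b - a) * (b + a) = 1 := sqrt_add_one_sub_sqrt_mul x (by linarith)
  have hb2a : b ≤ 2 * a := by
    have : b ^ 2 ≤ 4 * a ^ 2 := by
      rw [sq_sqrt (by linarith), sq_sqrt (by linarith)]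
      linarith
    nlinarith
  have hδ : 0 < b - a := by nlinarith
  have haδ : 1 ≤ 3 * (a * (b - a)) := by nlinarith
  have hδ_le : b - a ≤ 1 / 2 := by nlinarith
  have hexp : exp (-a / 2) = exp (-b / 2) * exp ((b - a) / 2) := by rw [← exp_add]; ring_nf
  have hlin : 1 + (b - a) / 2 ≤ exp ((b - a) / 2) := by linarith [add_one_le_exp ((b - a) / 2)]
  rw [hexp]
  have hE := exp_pos (-b / 2)
  suffices 8 * (b + 2) ≤ (8 * a + 15) * exp ((b - a) / 2) by nlinarith
  nlinarith [mul_le_mul_of_nonneg_left hlin (by linarith : (0 : ℝ) ≤ 8 * a + 15)]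

theorem sum_Ico_exp_neg_sqrt_half_le {m : ℕ} (hm : 1 ≤ m) (n : ℕ) :
    ∑ x ∈ Ico m n, exp (-√(x : ℝ) / 2) ≤ 8 * ((√(m : ℝ) + 2) * exp (-√(m : ℝ) / 2)) := by
  set h : ℕ → ℝ := fun x => (√(x : ℝ) + 2) * exp (-√(x : ℝ) / 2)
  have hh : ∀ x, 0 ≤ h x := fun x => by positivity
  rcases le_or_gt m n with hmn | hnm
  · calc ∑ x ∈ Ico m n, exp (-√(x : ℝ) / 2)
        ≤ ∑ x ∈ Ico m n, 8 * (h x - h (x + 1)) := by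
          refine sum_le_sum fun x hx => ?_
          have := exp_neg_sqrt_half_le_sub (x := x) (by exact_mod_cast (mem_Ico.1 hx).1.trans' hm)
          simpa [h] using this
      _ = 8 * (h m - h n) := by
          rw [← mul_sum, ← neg_sub (h n), ← sum_Ico_sub h hmn, ← sum_neg_distrib]
          simp only [neg_sub]
      _ ≤ 8 * h m := by linarith [hh n]
  · rw [Ico_eq_empty_of_le hnm.le, sum_empty]
    exact mul_nonneg (by norm_num) (hh m)

section ToyModel

variable (d N : ℕ)

theorem Ztoy_pos : 0 < Ztoy d N :=
  sum_pos (fun _ _ => exp_pos _) nonempty_range_add_one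

theorem muToy_nonneg (x : ℕ) : 0 ≤ muToy d N x := div_nonneg (exp_pos _).le (Ztoy_pos d N).le

theorem sum_muToy : ∑ x ∈ range (N ^ d + 1), muToy d N x = 1 := by
  rw [← div_self (Ztoy_pos d N).ne', Ztoy, sum_div]
  rfl

theorem dirToy_nonneg (f : ℕ → ℝ) : 0 ≤ dirToy d N f :=
  sum_nonneg fun x _ =>
    mul_nonneg (mul_nonneg (muToy_nonneg d N x) (rpow_nonneg (Nat.cast_nonneg _) _)) (sq_nonneg _)

theorem varToy_le_sum_mul_sq_sub (f : ℕ → ℝ) (a : ℝ) :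
    varToy d N f ≤ ∑ x ∈ range (N ^ d + 1), muToy d N x * (f x - a) ^ 2 :=
  sum_mul_sq_sub_sum_mul_le (sum_muToy d N) a

variable {d N} in
theorem div_le_invGapToy_and_invGapToy_le {c L U : ℝ} (hc : ∀ g, varToy d N g ≤ c * dirToy d N g)
    {f : ℕ → ℝ} (hL : 0 < L) (hLf : L ≤ varToy d N f) (hUf : dirToy d N f ≤ U) :
    L / U ≤ invGapToy d N ∧ invGapToy d N ≤ c := by
  have hlow : ∀ c' ∈ {c : ℝ | ∀ g, varToy d N g ≤ c * dirToy d N g}, L / U ≤ c' := by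
    intro c' hc'
    have hdir := dirToy_nonneg d N f
    have hL' : L ≤ c' * dirToy d N f := hLf.trans (hc' f)
    have hc'0 : 0 < c' := pos_of_mul_pos_left (hL.trans_le hL') hdir
    have hU : 0 < U := (pos_of_mul_pos_right (hL.trans_le hL') hc'0.le).trans_le hUf
    rw [div_le_iff₀ hU]
    exact hL'.trans (mul_le_mul_of_nonneg_left hUf hc'0.le)
  exact ⟨le_csInf ⟨c, hc⟩ hlow, csInf_le ⟨_, hlow⟩ hc⟩

theorem muToy_two (x : ℕ) : muToy 2 N x = exp (-√(x : ℝ)) / Ztoy 2 N := by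
  rw [muToy, alphaOf, sqrt_eq_rpow]
  norm_num

theorem bToy_two (x : ℕ) : bToy 2 x = √((max x 1 : ℕ) : ℝ) := by
  rw [bToy, alphaOf, sqrt_eq_rpow]
  norm_num

end ToyModel

def hardyWeight (u : ℕ) : ℝ := exp (√((u + 1 : ℕ) : ℝ) / 2) - exp (√(u : ℝ) / 2)

theorem hardyWeight_pos (u : ℕ) : 0 < hardyWeight u := by
  rw [hardyWeight, sub_pos]
  gcongr
  exact_mod_cast Nat.lt_succ_self u

theorem sum_range_hardyWeight (x : ℕ) : ∑ v ∈ range x, hardyWeight v = exp (√(x : ℝ) / 2) - 1 := by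
  rw [show (1 : ℝ) = exp (√((0 : ℕ) : ℝ) / 2) by simp]
  exact sum_range_sub (fun x : ℕ => exp (√(x : ℝ) / 2)) x

theorem exp_neg_sqrt_half_le_six_mul_hardyWeight (u : ℕ) :
    exp (-√(u : ℝ) / 2) ≤ 6 * (hardyWeight u * (exp (-√(u : ℝ)) * √((max u 1 : ℕ) : ℝ))) := by
  set a := √(u : ℝ)
  set b := √((u + 1 : ℕ) : ℝ)
  set β := √((max u 1 : ℕ) : ℝ)
  have hab : (b - a) * (b + a) = 1 := by
    rw [show b = √((u : ℝ) + 1) by simp [b]]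
    exact sqrt_add_one_sub_sqrt_mul u (Nat.cast_nonneg u)
  have ha : 0 ≤ a := sqrt_nonneg _
  have haβ : a ≤ β := sqrt_le_sqrt (by exact_mod_cast le_max_left u 1)
  have hbβ : b ≤ 2 * β := by
    have hsq : b ^ 2 ≤ (2 * β) ^ 2 := by
      rw [mul_pow, sq_sqrt (Nat.cast_nonneg _), sq_sqrt (Nat.cast_nonneg _)]
      exact_mod_cast (by omega : u + 1 ≤ 4 * max u 1)
    nlinarith [sqrt_nonneg ((u + 1 : ℕ) : ℝ), sqrt_nonneg ((max u 1 : ℕ) : ℝ)]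
  have hδ : 0 < b - a := by nlinarith [sqrt_nonneg ((u + 1 : ℕ) : ℝ)]
  have hδβ : 1 ≤ 3 * (β * (b - a)) := by nlinarith
  have hc : (b / 2 - a / 2) * exp (a / 2) ≤ hardyWeight u := mul_exp_le_exp_sub_exp _ _
  have hsplit : exp (-a / 2) = exp (a / 2) * exp (-a) := by rw [← exp_add]; ring_nf
  have hpos := exp_pos (a / 2)
  have hpos' := exp_pos (-a)
  rw [hsplit]
  nlinarith [mul_le_mul_of_nonneg_right hc (mul_nonneg hpos'.le (ha.trans haβ)),
    mul_le_mul_of_nonneg_right hδβ (mul_pos hpos hpos').le]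

theorem sum_Ioc_muToy_two_mul_le {N u : ℕ} (hu : u < N ^ 2) :
    ∑ x ∈ Ioc u (N ^ 2), muToy 2 N x * ∑ v ∈ range x, hardyWeight v
      ≤ 48 * (N + 2) * (hardyWeight u * (muToy 2 N u * bToy 2 u)) := by
  have hZ := Ztoy_pos 2 N
  have hsqrt : √((u + 1 : ℕ) : ℝ) ≤ N := by
    rw [sqrt_le_left (Nat.cast_nonneg N)]
    exact_mod_cast Nat.succ_le_of_lt hu
  calc ∑ x ∈ Ioc u (N ^ 2), muToy 2 N x * ∑ v ∈ range x, hardyWeight v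
      ≤ ∑ x ∈ Ioc u (N ^ 2), exp (-√(x : ℝ) / 2) / Ztoy 2 N := by
        refine sum_le_sum fun x _ => ?_
        rw [sum_range_hardyWeight, muToy_two, div_mul_eq_mul_div]
        gcongr
        calc exp (-√(x : ℝ)) * (exp (√(x : ℝ) / 2) - 1) ≤ exp (-√(x : ℝ)) * exp (√(x : ℝ) / 2) := by
              gcongr; linarith
          _ = exp (-√(x : ℝ) / 2) := by rw [← exp_add]; ring_nf
    _ ≤ 8 * ((√((u + 1 : ℕ) : ℝ) + 2) * exp (-√((u + 1 : ℕ) : ℝ) / 2)) / Ztoy 2 N := by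
        rw [← sum_div, ← Ico_add_one_add_one_eq_Ioc]
        gcongr
        exact sum_Ico_exp_neg_sqrt_half_le (by omega) _
    _ ≤ 8 * ((N + 2) * exp (-√(u : ℝ) / 2)) / Ztoy 2 N := by
        gcongr
        exact Nat.le_succ u
    _ = 8 * (N + 2) / Ztoy 2 N * exp (-√(u : ℝ) / 2) := by ring
    _ ≤ 8 * (N + 2) / Ztoy 2 N *
          (6 * (hardyWeight u * (exp (-√(u : ℝ)) * √((max u 1 : ℕ) : ℝ)))) := by
        gcongr
        exact exp_neg_sqrt_half_le_six_mul_hardyWeight u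
    _ = 48 * (N + 2) * (hardyWeight u * (muToy 2 N u * bToy 2 u)) := by
        rw [muToy_two, bToy_two]
        ring

theorem varToy_two_le_mul_dirToy {N : ℕ} (hN : 1 ≤ N) (f : ℕ → ℝ) :
    varToy 2 N f ≤ 144 * N * dirToy 2 N f := by
  have hN1 : (1 : ℝ) ≤ N := by exact_mod_cast hN
  calc varToy 2 N f ≤ ∑ x ∈ range (N ^ 2 + 1), muToy 2 N x * (f x - f 0) ^ 2 :=
        varToy_le_sum_mul_sq_sub 2 N f _
    _ ≤ 48 * (N + 2) * dirToy 2 N f :=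
        sum_mul_sq_sub_apply_zero_le (muToy_nonneg 2 N) hardyWeight_pos
          (fun _ hu => sum_Ioc_muToy_two_mul_le hu) f
    _ ≤ 144 * N * dirToy 2 N f := by
        have := dirToy_nonneg 2 N f
        nlinarith

theorem exp_neg_mul_mul_sq_exp_sub_exp_le {a b β : ℝ} (ha : 0 ≤ a) (hβ₀ : 0 ≤ β) (hβ : β ≤ b)
    (hab : (b - a) * (b + a) = 1) :
    exp (-a) * β * (exp b - exp a) ^ 2 ≤ exp 1 * (exp b - exp a) := by
  have hδ : 0 < b - a := by nlinarith
  have hδ1 : b - a ≤ 1 := by nlinarith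
  have hD : 0 ≤ exp b - exp a := sub_nonneg.2 (exp_le_exp.2 (by linarith))
  have hβδ : β * (b - a) ≤ 1 := by nlinarith
  have hexp : exp (-a) * exp b ≤ exp 1 := by rw [← exp_add]; exact exp_le_exp.2 (by linarith)
  have hmean := exp_sub_exp_le_mul_exp a b
  calc exp (-a) * β * (exp b - exp a) ^ 2
      ≤ exp (-a) * β * ((b - a) * exp b * (exp b - exp a)) := by
        rw [sq]; gcongr
    _ = β * (b - a) * (exp (-a) * exp b) * (exp b - exp a) := by ring
    _ ≤ 1 * exp 1 * (exp b - exp a) := by gcongr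
    _ = exp 1 * (exp b - exp a) := by ring

theorem dirToy_two_exp_sqrt_le (N : ℕ) :
    dirToy 2 N (fun x => exp √(x : ℝ)) ≤ exp 1 * exp N / Ztoy 2 N := by
  set G : ℕ → ℝ := fun x => exp √(x : ℝ)
  have hZ := Ztoy_pos 2 N
  calc dirToy 2 N G ≤ ∑ x ∈ range (N ^ 2), exp 1 / Ztoy 2 N * (G (x + 1) - G x) := by
        refine sum_le_sum fun x _ => ?_
        simp only [muToy_two, bToy_two, div_mul_eq_mul_div]
        refine div_le_div_of_nonneg_right ?_ hZ.le
        apply exp_neg_mul_mul_sq_exp_sub_exp_le (sqrt_nonneg _) (sqrt_nonneg _)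
        · exact sqrt_le_sqrt (by exact_mod_cast (by omega : max x 1 ≤ x + 1))
        · rw [show √((x + 1 : ℕ) : ℝ) = √((x : ℝ) + 1) by push_cast; rfl]
          exact sqrt_add_one_sub_sqrt_mul x (Nat.cast_nonneg x)
    _ = exp 1 / Ztoy 2 N * (G (N ^ 2) - G 0) := by rw [← mul_sum, sum_range_sub]
    _ ≤ exp 1 * exp N / Ztoy 2 N := by
        have hGN : G (N ^ 2) = exp N := by
          simp only [G, Nat.cast_pow, sqrt_sq (Nat.cast_nonneg N)]
        rw [hGN, mul_div_right_comm]
        gcongr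
        simp [G]

theorem sqrt_mem_Ioc_sub_self_sq {N y : ℕ} (hN : 1 ≤ N) (hy : y ∈ Ioc (N ^ 2 - N) (N ^ 2)) :
    (N : ℝ) - 1 ≤ √(y : ℝ) ∧ 1 ≤ √(y : ℝ) := by
  have hN1 : (1 : ℝ) ≤ N := by exact_mod_cast hN
  have hNy : N ^ 2 + 1 ≤ y + N := by
    have := Nat.le_self_pow two_ne_zero N
    have := (mem_Ioc.1 hy).1
    omega
  have hNy' : (N : ℝ) ^ 2 + 1 ≤ y + N := by exact_mod_cast hNy
  exact ⟨(le_sqrt (by linarith) (Nat.cast_nonneg _)).2 (by nlinarith),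
    one_le_sqrt.2 (by nlinarith)⟩

theorem card_Ioc_sub_self_sq (N : ℕ) : #(Ioc (N ^ 2 - N) (N ^ 2)) = N := by
  have := Nat.le_self_pow two_ne_zero N
  rw [Nat.card_Ioc]
  omega

theorem sum_Ioc_muToy_two_le {N : ℕ} (hN : 1 ≤ N) :
    ∑ y ∈ Ioc (N ^ 2 - N) (N ^ 2), muToy 2 N y ≤ muToy 2 N 0 := by
  have hZ := Ztoy_pos 2 N
  calc ∑ y ∈ Ioc (N ^ 2 - N) (N ^ 2), muToy 2 N y
      ≤ ∑ _y ∈ Ioc (N ^ 2 - N) (N ^ 2), exp (-((N : ℝ) - 1)) / Ztoy 2 N := by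
        refine sum_le_sum fun y hy => ?_
        rw [muToy_two]
        gcongr
        exact (sqrt_mem_Ioc_sub_self_sq hN hy).1
    _ = N * exp (-((N : ℝ) - 1)) / Ztoy 2 N := by
        rw [sum_const, card_Ioc_sub_self_sq, nsmul_eq_mul, mul_div]
    _ ≤ muToy 2 N 0 := by
        rw [muToy_two, Nat.cast_zero, sqrt_zero, neg_zero, exp_zero]
        gcongr
        rw [exp_neg, ← div_eq_mul_inv, div_le_one (exp_pos _)]
        linarith [add_one_le_exp ((N : ℝ) - 1)]

theorem exp_le_four_mul_exp_neg_mul_sq {s : ℝ} (hs : 1 ≤ s) :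
    exp s ≤ 4 * (exp (-s) * (exp s - 1) ^ 2) := by
  have h2 : 2 ≤ exp s := by linarith [add_one_le_exp s]
  rw [exp_neg, ← div_eq_inv_mul, mul_div_assoc', le_div_iff₀ (exp_pos s)]
  nlinarith

theorem le_sum_Ioc_muToy_two_mul_sq {N : ℕ} (hN : 1 ≤ N) :
    N * exp N / (4 * exp 1 * Ztoy 2 N)
      ≤ ∑ y ∈ Ioc (N ^ 2 - N) (N ^ 2), muToy 2 N y * (exp √(y : ℝ) - exp √((0 : ℕ) : ℝ)) ^ 2 := by
  have hZ := Ztoy_pos 2 N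
  rw [show N * exp N / (4 * exp 1 * Ztoy 2 N)
      = ∑ _y ∈ Ioc (N ^ 2 - N) (N ^ 2), exp N / (4 * exp 1 * Ztoy 2 N) by
    rw [sum_const, card_Ioc_sub_self_sq, nsmul_eq_mul, mul_div_assoc]]
  refine sum_le_sum fun y hy => ?_
  obtain ⟨hNy, hy1⟩ := sqrt_mem_Ioc_sub_self_sq hN hy
  have hexp : exp N / exp 1 ≤ exp √(y : ℝ) := by
    rw [div_le_iff₀ (exp_pos 1), ← exp_add]
    exact exp_le_exp.2 (by linarith)
  rw [muToy_two, Nat.cast_zero, sqrt_zero, exp_zero]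
  calc exp N / (4 * exp 1 * Ztoy 2 N) = exp N / exp 1 / 4 / Ztoy 2 N := by field_simp
    _ ≤ exp (-√(y : ℝ)) * (exp √(y : ℝ) - 1) ^ 2 / Ztoy 2 N := by
        gcongr
        linarith [exp_le_four_mul_exp_neg_mul_sq hy1]
    _ = _ := by ring

theorem le_varToy_two_exp_sqrt {N : ℕ} (hN : 1 ≤ N) :
    N * exp N / (16 * exp 1 * Ztoy 2 N) ≤ varToy 2 N (fun x => exp √(x : ℝ)) := by
  have hwindow := le_sum_Ioc_muToy_two_mul_sq hN
  have hvar : _ ≤ 4 * varToy 2 N (fun x => exp √(x : ℝ)) :=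
    sum_mul_sq_sub_le_four_mul (f := fun x : ℕ => exp √(x : ℝ))
    (fun x _ => muToy_nonneg 2 N x)
    (fun y hy => mem_range.2 (Nat.lt_succ_of_le (mem_Ioc.1 hy).2)) (by simp)
    (sum_Ioc_muToy_two_le hN) (meanToy 2 N fun x => exp √(x : ℝ))
  have hsplit : N * exp N / (16 * exp 1 * Ztoy 2 N) = N * exp N / (4 * exp 1 * Ztoy 2 N) / 4 := by
    field_simp
    ring
  rw [hsplit]
  linarith [hwindow.trans hvar]

theorem toy_invGap_order_N_dim_two :
    ∃ k : ℝ, 0 < k ∧ ∀ N : ℕ, 1 ≤ N →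
      (N : ℝ) / k ≤ invGapToy 2 N ∧ invGapToy 2 N ≤ k * (N : ℝ) := by
  refine ⟨144, by norm_num, fun N hN => ?_⟩
  have hZ := Ztoy_pos 2 N
  have hN0 : (0 : ℝ) < N := by exact_mod_cast hN
  obtain ⟨hlow, hup⟩ := div_le_invGapToy_and_invGapToy_le (varToy_two_le_mul_dirToy hN)
    (by positivity) (le_varToy_two_exp_sqrt hN) (dirToy_two_exp_sqrt_le N)
  refine ⟨le_trans ?_ hlow, hup⟩
  have hratio : N * exp N / (16 * exp 1 * Ztoy 2 N) / (exp 1 * exp N / Ztoy 2 N)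
      = N / (16 * exp 1 ^ 2) := by
    field_simp
  have he : exp 1 ^ 2 ≤ 9 := by nlinarith [exp_one_lt_d9, exp_pos 1]
  rw [hratio]
  gcongr
  linarith

end
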